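/- arXiv:2006.12592 — 5 statements merged into one kernel-verified Lean document; each statement's English description precedes it below -/
import Mathlib

section
/- For every μ > 0, the smoothed norm g_μ : ℝ^p → ℝ defined by g_μ(z) := sup{⟨α, z⟩ − (μ/2)‖α‖₂² : ‖α‖₂ ≤ 1} is differentiable at every z ∈ ℝ^p, and its gradient at z equals P₂(z/μ), where P₂(v) := v if ‖v‖₂ ≤ 1 and P₂(v) := v/‖v‖₂ otherwise. -/
open scoped InnerProductSpace

/-- The smoothed norm `g_μ(z) = sup { ⟪α, z⟫ - (μ/2)‖α‖₂² : ‖α‖₂ ≤ 1 }`. -/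
noncomputable def gsm {p : ℕ} (μ : ℝ) (z : EuclideanSpace ℝ (Fin p)) : ℝ :=
  sSup ((fun α : EuclideanSpace ℝ (Fin p) => ⟪α, z⟫_ℝ - μ / 2 * ‖α‖ ^ 2) ''
    {α : EuclideanSpace ℝ (Fin p) | ‖α‖ ≤ 1})

/-- Projection onto the closed Euclidean unit ball. -/
noncomputable def proj2 {p : ℕ} (v : EuclideanSpace ℝ (Fin p)) : EuclideanSpace ℝ (Fin p) :=
  if ‖v‖ ≤ 1 then v else ‖v‖⁻¹ • v

/-!
`g_μ` is a supremum of affine functions `z ↦ ⟪α, z⟫ - (μ/2)‖α‖²`. Completing the square, the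
supremum is attained at the point of the unit ball nearest to `z/μ`, namely `P₂(z/μ)`; hence
`P₂(·/μ)` is a subgradient selection of `g_μ`. A function with a subgradient selection that is
continuous at `z` is differentiable at `z`, with that subgradient as gradient: the first-order
error is squeezed between `0` and `⟪σ w - σ z, w - z⟫ = o(‖w - z‖)`.
-/

theorem hasGradientAt_of_subgradient_of_continuousAt {F : Type*} [NormedAddCommGroup F]
    [InnerProductSpace ℝ F] [CompleteSpace F] {f : F → ℝ} {σ : F → F} {z : F}
    (hsub : ∀ x y, f x + ⟪σ x, y - x⟫_ℝ ≤ f y) (hσ : ContinuousAt σ z) :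
    HasGradientAt f (σ z) z := by
  rw [hasGradientAt_iff_isLittleO, Asymptotics.isLittleO_iff]
  intro c hc
  filter_upwards [Metric.tendsto_nhds.mp hσ c hc] with w hw
  have hlower : 0 ≤ f w - f z - ⟪σ z, w - z⟫_ℝ := by linarith [hsub z w]
  have hupper : f w - f z - ⟪σ z, w - z⟫_ℝ ≤ ⟪σ w - σ z, w - z⟫_ℝ := by
    have h := hsub w z
    rw [← neg_sub w z, inner_neg_right] at h
    rw [inner_sub_left]
    linarith
  rw [Real.norm_eq_abs, abs_of_nonneg hlower]
  calc f w - f z - ⟪σ z, w - z⟫_ℝ ≤ ‖σ w - σ z‖ * ‖w - z‖ :=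
        hupper.trans (real_inner_le_norm _ _)
    _ ≤ c * ‖w - z‖ := by
        gcongr
        rw [← dist_eq_norm]
        exact hw.le

theorem inner_sub_mul_norm_sq_eq {F : Type*} [NormedAddCommGroup F] [InnerProductSpace ℝ F]
    {μ : ℝ} (hμ : μ ≠ 0) (α z : F) :
    ⟪α, z⟫_ℝ - μ / 2 * ‖α‖ ^ 2 = μ / 2 * ‖μ⁻¹ • z‖ ^ 2 - μ / 2 * ‖α - μ⁻¹ • z‖ ^ 2 := by
  obtain ⟨v, rfl⟩ : ∃ v, z = μ • v := ⟨μ⁻¹ • z, by rw [smul_smul, mul_inv_cancel₀ hμ, one_smul]⟩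
  rw [smul_smul, inv_mul_cancel₀ hμ, one_smul, real_inner_smul_right, norm_sub_sq_real]
  ring

section Proj2

variable {p : ℕ}

theorem proj2_eq_inv_max_smul (v : EuclideanSpace ℝ (Fin p)) :
    proj2 v = (max ‖v‖ 1)⁻¹ • v := by
  unfold proj2
  split_ifs with h
  · rw [max_eq_right h, inv_one, one_smul]
  · rw [max_eq_left (not_le.mp h).le]

theorem norm_proj2_le (v : EuclideanSpace ℝ (Fin p)) : ‖proj2 v‖ ≤ 1 := by
  unfold proj2
  split_ifs with h
  · exact h
  · rw [norm_smul, norm_inv, norm_norm, inv_mul_cancel₀ (by linarith [not_le.mp h])]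

theorem continuous_proj2 : Continuous (proj2 (p := p)) := by
  simp_rw [funext proj2_eq_inv_max_smul]
  exact ((continuous_norm.max continuous_const).inv₀
    fun v => (one_pos.trans_le (le_max_right _ _)).ne').smul continuous_id

theorem norm_proj2_sub_le {v α : EuclideanSpace ℝ (Fin p)} (hα : ‖α‖ ≤ 1) :
    ‖proj2 v - v‖ ≤ ‖α - v‖ := by
  unfold proj2
  split_ifs with h
  · simp
  · have hv : 1 < ‖v‖ := not_le.mp h
    have hdist : ‖‖v‖⁻¹ • v - v‖ = ‖v‖ - 1 := by
      rw [show ‖v‖⁻¹ • v - v = (‖v‖⁻¹ - 1) • v by rw [sub_smul, one_smul], norm_smul,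
        Real.norm_eq_abs, abs_of_nonpos (sub_nonpos.mpr (inv_le_one_of_one_le₀ hv.le))]
      field_simp
      ring
    calc ‖‖v‖⁻¹ • v - v‖ = ‖v‖ - 1 := hdist
      _ ≤ ‖v‖ - ‖α‖ := by linarith
      _ ≤ ‖α - v‖ := by rw [norm_sub_rev]; exact norm_sub_norm_le _ _

end Proj2

section Gsm

variable {p : ℕ} {μ : ℝ}

theorem gsm_isGreatest (hμ : 0 < μ) (z : EuclideanSpace ℝ (Fin p)) :
    IsGreatest ((fun α : EuclideanSpace ℝ (Fin p) => ⟪α, z⟫_ℝ - μ / 2 * ‖α‖ ^ 2) ''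
      {α : EuclideanSpace ℝ (Fin p) | ‖α‖ ≤ 1})
      (⟪proj2 (μ⁻¹ • z), z⟫_ℝ - μ / 2 * ‖proj2 (μ⁻¹ • z)‖ ^ 2) := by
  refine ⟨⟨proj2 (μ⁻¹ • z), norm_proj2_le _, rfl⟩, ?_⟩
  rintro _ ⟨α, hα, rfl⟩
  have hnearest := pow_le_pow_left₀ (norm_nonneg _) (norm_proj2_sub_le (v := μ⁻¹ • z) hα) 2
  dsimp only
  rw [inner_sub_mul_norm_sq_eq hμ.ne', inner_sub_mul_norm_sq_eq hμ.ne']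
  nlinarith

theorem gsm_add_inner_sub_le (hμ : 0 < μ) (z y : EuclideanSpace ℝ (Fin p)) :
    gsm μ z + ⟪proj2 (μ⁻¹ • z), y - z⟫_ℝ ≤ gsm μ y := by
  have hz : gsm μ z = ⟪proj2 (μ⁻¹ • z), z⟫_ℝ - μ / 2 * ‖proj2 (μ⁻¹ • z)‖ ^ 2 :=
    (gsm_isGreatest hμ z).csSup_eq
  have hy := le_csSup (gsm_isGreatest hμ y).bddAbove ⟨proj2 (μ⁻¹ • z), norm_proj2_le _, rfl⟩
  rw [hz, inner_sub_right]
  unfold gsm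
  linarith

end Gsm

/-- For every `μ > 0`, `g_μ` is differentiable everywhere with gradient `P₂(z/μ)` at `z`. -/
theorem stmt4 {p : ℕ} (μ : ℝ) (hμ : 0 < μ) :
    ∀ z : EuclideanSpace ℝ (Fin p), HasGradientAt (gsm μ) (proj2 (μ⁻¹ • z)) z := fun _ =>
  hasGradientAt_of_subgradient_of_continuousAt (σ := fun w => proj2 (μ⁻¹ • w))
    (gsm_add_inner_sub_le hμ) (continuous_proj2.comp (continuous_const_smul μ⁻¹)).continuousAt
end

section
/- Fix z ∈ ℝ^p with Σ_{i=1}^p |z_i| > 1, and suppose λ* ≥ 0 satisfies Σ_{i=1}^p (|z_i| − λ*)₊ = 1. Then the vector S(z, λ*) with i-th coordinate sgn(z_i)·(|z_i| − λ*)₊ is the unique minimizer of x ↦ ‖x − z‖₂² over the ℓ¹ unit ball {x ∈ ℝ^p : Σ_i |x_i| ≤ 1}. Moreover, if Σ_{i=1}^p |z_i| ≤ 1, then z itself is the unique minimizer. -/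
/-!
A point `w` of a set `K` is the unique point of `K` closest to `z` as soon as
`⟪x - w, w - z⟫ ≥ 0` for every `x ∈ K`, since then
`‖x - z‖² = ‖w - z‖² + ‖x - w‖² + 2⟪x - w, w - z⟫`.
For `w = S(z, λ)` this variational inequality holds coordinatewise up to a term
`λ (|w_i| - |x_i|)`, because `z_i - w_i` is `λ` times a subgradient of `|·|` at `w_i`;
summing, these terms add up to `λ (1 - Σ |x_i|) ≥ 0` on the `ℓ¹` ball, as `Σ |w_i| = 1`.
-/

open RealInnerProductSpace

/-- Euclidean norm of a vector in `ℝ^m`. -/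
noncomputable def enorm2 {m : ℕ} (x : Fin m → ℝ) : ℝ := Real.sqrt (∑ i, x i ^ 2)

theorem norm_sub_sq_add_norm_sub_sq_le_of_inner_nonneg {E : Type*} [NormedAddCommGroup E]
    [InnerProductSpace ℝ E] {x w z : E} (h : 0 ≤ ⟪x - w, w - z⟫) :
    ‖w - z‖ ^ 2 + ‖x - w‖ ^ 2 ≤ ‖x - z‖ ^ 2 := by
  have hsplit : x - z = (x - w) + (w - z) := by abel
  rw [hsplit, norm_add_sq_real]
  linarith

theorem enorm2_eq_norm_toLp {m : ℕ} (x : Fin m → ℝ) :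
    enorm2 x = ‖(WithLp.toLp 2 x : EuclideanSpace ℝ (Fin m))‖ := by
  simp [enorm2, EuclideanSpace.norm_eq]

theorem inner_toLp_eq_sum {m : ℕ} (x y : Fin m → ℝ) :
    ⟪(WithLp.toLp 2 x : EuclideanSpace ℝ (Fin m)), WithLp.toLp 2 y⟫ = ∑ i, x i * y i := by
  simp [PiLp.inner_apply, mul_comm]

theorem enorm2_sub_sq_le_of_sum_mul_nonneg {m : ℕ} {K : Set (Fin m → ℝ)} {w z : Fin m → ℝ}
    (h : ∀ x ∈ K, 0 ≤ ∑ i, (x i - w i) * (w i - z i)) :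
    (∀ x ∈ K, enorm2 (w - z) ^ 2 ≤ enorm2 (x - z) ^ 2) ∧
      (∀ x ∈ K, enorm2 (x - z) ^ 2 ≤ enorm2 (w - z) ^ 2 → x = w) := by
  have hpyth : ∀ x ∈ K, enorm2 (w - z) ^ 2 + enorm2 (x - w) ^ 2 ≤ enorm2 (x - z) ^ 2 := by
    intro x hx
    simp only [enorm2_eq_norm_toLp, WithLp.toLp_sub]
    apply norm_sub_sq_add_norm_sub_sq_le_of_inner_nonneg
    simpa only [← WithLp.toLp_sub, inner_toLp_eq_sum, Pi.sub_apply] using h x hx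
  refine ⟨fun x hx => ?_, fun x hx hle => ?_⟩
  · nlinarith [hpyth x hx]
  · have hxw : enorm2 (x - w) ^ 2 = 0 := le_antisymm (by linarith [hpyth x hx]) (sq_nonneg _)
    rw [pow_eq_zero_iff two_ne_zero, enorm2_eq_norm_toLp, norm_eq_zero] at hxw
    simpa [sub_eq_zero] using congrArg WithLp.ofLp hxw

noncomputable def softThreshold (lam a : ℝ) : ℝ := Real.sign a * max (|a| - lam) 0

theorem abs_softThreshold {lam : ℝ} (hlam : 0 ≤ lam) (a : ℝ) :
    |softThreshold lam a| = max (|a| - lam) 0 := by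
  rcases lt_trichotomy a 0 with ha | rfl | ha
  · simp [softThreshold, Real.sign_of_neg ha]
  · simp [softThreshold, hlam]
  · simp [softThreshold, Real.sign_of_pos ha]

theorem mul_abs_softThreshold_sub_abs_le {lam : ℝ} (hlam : 0 ≤ lam) (a x : ℝ) :
    lam * (|softThreshold lam a| - |x|) ≤
      (x - softThreshold lam a) * (softThreshold lam a - a) := by
  rcases le_or_gt |a| lam with hsmall | hlarge
  · have hax : a * x ≤ lam * |x| := calc
      a * x ≤ |a| * |x| := by rw [← abs_mul]; exact le_abs_self _
      _ ≤ lam * |x| := by gcongr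
    simp only [softThreshold, max_eq_right (sub_nonpos.mpr hsmall), mul_zero, abs_zero]
    linarith
  · have hpos : 0 ≤ |a| - lam := (sub_pos.mpr hlarge).le
    rw [abs_softThreshold hlam, max_eq_left hpos, softThreshold, max_eq_left hpos]
    rcases lt_trichotomy a 0 with ha | rfl | ha
    · rw [Real.sign_of_neg ha, abs_of_neg ha]
      nlinarith [mul_le_mul_of_nonneg_left (neg_abs_le x) hlam]
    · simp only [abs_zero] at hlarge
      linarith
    · rw [Real.sign_of_pos ha, abs_of_pos ha]
      nlinarith [mul_le_mul_of_nonneg_left (le_abs_self x) hlam]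

/-- Projection onto the `ℓ¹` unit ball via soft thresholding: if `Σ_i |z_i| > 1` and `λ* ≥ 0`
satisfies `Σ_i (|z_i| - λ*)₊ = 1`, then `S(z, λ*)_i = sgn(z_i)(|z_i| - λ*)₊` is the unique
minimizer of `x ↦ ‖x - z‖₂²` over `{x : Σ_i |x_i| ≤ 1}`; moreover, if `Σ_i |z_i| ≤ 1`, then
`z` itself is the unique minimizer. -/
theorem stmt12 {p : ℕ} (z : Fin p → ℝ) (lam : ℝ) (hlam : 0 ≤ lam) :
    let S : Fin p → ℝ := fun i => Real.sign (z i) * max (|z i| - lam) 0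
    ((1 < ∑ i, |z i|) → (∑ i, max (|z i| - lam) 0) = 1 →
      (∑ i, |S i|) ≤ 1 ∧
      (∀ x : Fin p → ℝ, (∑ i, |x i|) ≤ 1 → enorm2 (S - z) ^ 2 ≤ enorm2 (x - z) ^ 2) ∧
      (∀ x : Fin p → ℝ, (∑ i, |x i|) ≤ 1 → enorm2 (x - z) ^ 2 ≤ enorm2 (S - z) ^ 2 → x = S)) ∧
    ((∑ i, |z i|) ≤ 1 →
      (∀ x : Fin p → ℝ, (∑ i, |x i|) ≤ 1 → enorm2 (z - z) ^ 2 ≤ enorm2 (x - z) ^ 2) ∧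
      (∀ x : Fin p → ℝ, (∑ i, |x i|) ≤ 1 → enorm2 (x - z) ^ 2 ≤ enorm2 (z - z) ^ 2 → x = z)) := by
  intro S
  have hS : ∑ i, |S i| = ∑ i, max (|z i| - lam) 0 :=
    Finset.sum_congr rfl fun i _ => abs_softThreshold hlam (z i)
  refine ⟨fun _ hsum => ⟨(hS.trans hsum).le,
      enorm2_sub_sq_le_of_sum_mul_nonneg (K := {x | ∑ i, |x i| ≤ 1}) fun x hx => ?_⟩,
    fun _ => enorm2_sub_sq_le_of_sum_mul_nonneg (K := {x | ∑ i, |x i| ≤ 1})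
      fun x _ => by simp⟩
  calc 0 ≤ lam * (1 - ∑ i, |x i|) := mul_nonneg hlam (sub_nonneg.mpr hx)
    _ = ∑ i, lam * (|S i| - |x i|) := by
      rw [← Finset.mul_sum, Finset.sum_sub_distrib, hS, hsum]
    _ ≤ ∑ i, (x i - S i) * (S i - z i) :=
      Finset.sum_le_sum fun i _ => mul_abs_softThreshold_sub_abs_le hlam (z i) (x i)
end

section
/- Fix x_i, x_j ∈ ℝ^p, λ > 0, and ω > 0, and define J(u_i, u_j) := (1/2)(‖x_i − u_i‖₂² + ‖x_j − u_j‖₂²) + λω‖u_i − u_j‖₂ for (u_i, u_j) ∈ ℝ^p × ℝ^p. If λω ≥ ‖x_i − x_j‖₂ / 2, then J attains its minimum over ℝ^p × ℝ^p uniquely at u_i = u_j = (x_i + x_j)/2. -/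
/-!
Writing `m` for the midpoint of `a = xᵢ` and `b = xⱼ`, expanding the squares gives
`J(u, v) = J(m, m) + (‖m - u‖² + ‖m - v‖²) / 2 + ⟪a - b, v - u⟫ / 2 + λω ‖u - v‖`.
By Cauchy–Schwarz the cross term is at least `-(‖a - b‖ / 2) ‖u - v‖`, which the fusion penalty
absorbs as soon as `λω ≥ ‖a - b‖ / 2`. Hence `J(u, v) ≥ J(m, m) + (‖m - u‖² + ‖m - v‖²) / 2`,
which gives both minimality and uniqueness.
-/

open scoped RealInnerProductSpace

namespace TwoPointClustering

variable {E : Type*} [NormedAddCommGroup E] [InnerProductSpace ℝ E]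

/-- The objective `J`, with `c = λω`. -/
noncomputable def objective (a b : E) (c : ℝ) (u : E × E) : ℝ :=
  (1 / 2) * (‖a - u.1‖ ^ 2 + ‖b - u.2‖ ^ 2) + c * ‖u.1 - u.2‖

theorem norm_sub_sq_add_norm_sub_sq_eq (a b u v : E) :
    ‖a - u‖ ^ 2 + ‖b - v‖ ^ 2 =
      ‖a - b‖ ^ 2 / 2 + ‖midpoint ℝ a b - u‖ ^ 2 + ‖midpoint ℝ a b - v‖ ^ 2
        + ⟪a - b, v - u⟫ := by
  rw [midpoint_eq_smul_add, invOf_eq_inv]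
  simp only [← real_inner_self_eq_norm_sq, inner_sub_left, inner_sub_right, inner_add_left,
    inner_add_right, inner_smul_left, inner_smul_right, RCLike.conj_to_real]
  rw [real_inner_comm u a, real_inner_comm v b, real_inner_comm b a, real_inner_comm u b,
    real_inner_comm v a]
  ring

theorem objective_midpoint (a b : E) (c : ℝ) :
    objective a b c (midpoint ℝ a b, midpoint ℝ a b) = ‖a - b‖ ^ 2 / 4 := by
  have := norm_sub_sq_add_norm_sub_sq_eq a b (midpoint ℝ a b) (midpoint ℝ a b)
  simp only [sub_self, norm_zero, inner_zero_right] at this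
  simp only [objective, this, sub_self, norm_zero]
  ring

theorem objective_midpoint_add_le {a b : E} {c : ℝ} (h : ‖a - b‖ / 2 ≤ c) (u : E × E) :
    objective a b c (midpoint ℝ a b, midpoint ℝ a b)
        + (‖midpoint ℝ a b - u.1‖ ^ 2 + ‖midpoint ℝ a b - u.2‖ ^ 2) / 2
      ≤ objective a b c u := by
  have hcross : -(‖a - b‖ * ‖u.1 - u.2‖) ≤ ⟪a - b, u.2 - u.1⟫ := by
    rw [← norm_sub_rev u.2]
    exact neg_le_of_abs_le (abs_real_inner_le_norm _ _)
  have hpenalty : ‖a - b‖ * ‖u.1 - u.2‖ ≤ 2 * c * ‖u.1 - u.2‖ := by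
    gcongr
    linarith
  rw [objective_midpoint, objective, norm_sub_sq_add_norm_sub_sq_eq a b u.1 u.2]
  linarith

theorem objective_midpoint_le {a b : E} {c : ℝ} (h : ‖a - b‖ / 2 ≤ c) (u : E × E) :
    objective a b c (midpoint ℝ a b, midpoint ℝ a b) ≤ objective a b c u := by
  have := objective_midpoint_add_le h u
  have : 0 ≤ ‖midpoint ℝ a b - u.1‖ ^ 2 + ‖midpoint ℝ a b - u.2‖ ^ 2 := by positivity
  linarith

theorem eq_midpoint_of_objective_le {a b : E} {c : ℝ} (h : ‖a - b‖ / 2 ≤ c) {u : E × E}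
    (hu : objective a b c u ≤ objective a b c (midpoint ℝ a b, midpoint ℝ a b)) :
    u = (midpoint ℝ a b, midpoint ℝ a b) := by
  have hle := objective_midpoint_add_le h u
  have hsum : ‖midpoint ℝ a b - u.1‖ ^ 2 + ‖midpoint ℝ a b - u.2‖ ^ 2 = 0 :=
    le_antisymm (by linarith) (by positivity)
  obtain ⟨h₁, h₂⟩ := (add_eq_zero_iff_of_nonneg (sq_nonneg _) (sq_nonneg _)).mp hsum
  simp only [sq_eq_zero_iff, norm_eq_zero, sub_eq_zero] at h₁ h₂
  exact Prod.ext h₁.symm h₂.symm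

end TwoPointClustering

open TwoPointClustering in
theorem stmt13_general {p : ℕ} (xi xj : EuclideanSpace ℝ (Fin p)) (lam ω : ℝ)
    (h : ‖xi - xj‖ / 2 ≤ lam * ω) :
    let J : EuclideanSpace ℝ (Fin p) × EuclideanSpace ℝ (Fin p) → ℝ := fun u =>
      (1 / 2) * (‖xi - u.1‖ ^ 2 + ‖xj - u.2‖ ^ 2) + lam * ω * ‖u.1 - u.2‖
    let m : EuclideanSpace ℝ (Fin p) := (2 : ℝ)⁻¹ • (xi + xj)
    (∀ u, J (m, m) ≤ J u) ∧ (∀ u, J u ≤ J (m, m) → u = (m, m)) := by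
  intro J m
  have hJ : J = objective xi xj (lam * ω) := rfl
  have hm : m = midpoint ℝ xi xj := by rw [midpoint_eq_smul_add, invOf_eq_inv]
  rw [hJ, hm]
  exact ⟨objective_midpoint_le h, fun _ => eq_midpoint_of_objective_le h⟩

/-- Two-point convex clustering objective: when `λω ≥ ‖x_i - x_j‖₂/2`, the objective
`J(u_i, u_j) = (1/2)(‖x_i - u_i‖₂² + ‖x_j - u_j‖₂²) + λω‖u_i - u_j‖₂` is uniquely minimized
at `u_i = u_j = (x_i + x_j)/2`. -/
theorem stmt13 {p : ℕ} (xi xj : EuclideanSpace ℝ (Fin p)) (lam ω : ℝ)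
    (hlam : 0 < lam) (hω : 0 < ω) (h : ‖xi - xj‖ / 2 ≤ lam * ω) :
    let J : EuclideanSpace ℝ (Fin p) × EuclideanSpace ℝ (Fin p) → ℝ := fun u =>
      (1 / 2) * (‖xi - u.1‖ ^ 2 + ‖xj - u.2‖ ^ 2) + lam * ω * ‖u.1 - u.2‖
    let m : EuclideanSpace ℝ (Fin p) := (2 : ℝ)⁻¹ • (xi + xj)
    (∀ u, J (m, m) ≤ J u) ∧ (∀ u, J u ≤ J (m, m) → u = (m, m)) :=
  stmt13_general xi xj lam ω h
end

section
/- Fix x_i, x_j ∈ ℝ^p, λ > 0, and ω > 0 with 0 < λω < ‖x_i − x_j‖₂ / 2 (so in particular x_i ≠ x_j), and define J(u_i, u_j) := (1/2)(‖x_i − u_i‖₂² + ‖x_j − u_j‖₂²) + λω‖u_i − u_j‖₂. Then J attains its minimum over ℝ^p × ℝ^p uniquely at u_i* = x_i − λω (x_i − x_j)/‖x_i − x_j‖₂ and u_j* = x_j + λω (x_i − x_j)/‖x_i − x_j‖₂; in particular u_i* ≠ u_j*. -/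
set_option maxHeartbeats 1000000 in
/-- Two-point convex clustering objective: when `0 < λω < ‖x_i - x_j‖₂/2`, the objective
`J(u_i, u_j) = (1/2)(‖x_i - u_i‖₂² + ‖x_j - u_j‖₂²) + λω‖u_i - u_j‖₂` is uniquely minimized at
`u_i* = x_i - λω(x_i - x_j)/‖x_i - x_j‖₂` and `u_j* = x_j + λω(x_i - x_j)/‖x_i - x_j‖₂`,
and in particular `u_i* ≠ u_j*`. -/
theorem stmt14 {p : ℕ} (xi xj : EuclideanSpace ℝ (Fin p)) (lam ω : ℝ)
    (hlam : 0 < lam) (hω : 0 < ω) (h : lam * ω < ‖xi - xj‖ / 2) :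
    let J : EuclideanSpace ℝ (Fin p) × EuclideanSpace ℝ (Fin p) → ℝ := fun u =>
      (1 / 2) * (‖xi - u.1‖ ^ 2 + ‖xj - u.2‖ ^ 2) + lam * ω * ‖u.1 - u.2‖
    let uis : EuclideanSpace ℝ (Fin p) := xi - (lam * ω / ‖xi - xj‖) • (xi - xj)
    let ujs : EuclideanSpace ℝ (Fin p) := xj + (lam * ω / ‖xi - xj‖) • (xi - xj)
    (∀ u, J (uis, ujs) ≤ J u) ∧ (∀ u, J u ≤ J (uis, ujs) → u = (uis, ujs)) ∧ uis ≠ ujs := by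
  intro J uis ujs
  set t := lam * ω with htdef
  have ht : 0 < t := mul_pos hlam hω
  set D := ‖xi - xj‖ with hDdef
  have hD : 0 < D := by linarith
  have h2t : 2 * t < D := by linarith
  -- norms at the candidate optimum
  have hai : xi - uis = (t / D) • (xi - xj) := by
    show xi - (xi - (t / D) • (xi - xj)) = _
    abel
  have hbj : xj - ujs = -((t / D) • (xi - xj)) := by
    show xj - (xj + (t / D) • (xi - xj)) = _
    abel
  have hnai : ‖xi - uis‖ = t := by
    rw [hai, norm_smul, Real.norm_of_nonneg (by positivity), ← hDdef,
      div_mul_cancel₀ _ hD.ne']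
  have hnbj : ‖xj - ujs‖ = t := by
    rw [hbj, norm_neg, norm_smul, Real.norm_of_nonneg (by positivity), ← hDdef,
      div_mul_cancel₀ _ hD.ne']
  have huij : uis - ujs = (1 - 2 * t / D) • (xi - xj) := by
    show (xi - (t / D) • (xi - xj)) - (xj + (t / D) • (xi - xj)) = _
    rw [sub_smul, one_smul]
    rw [show (2 * t / D) • (xi - xj) = (t / D) • (xi - xj) + (t / D) • (xi - xj) by
      rw [← add_smul]; ring_nf]
    abel
  have hnuij : ‖uis - ujs‖ = D - 2 * t := by
    rw [huij, norm_smul, Real.norm_of_nonneg (by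
      rw [sub_nonneg]; rw [div_le_one hD]; linarith), ← hDdef]
    field_simp
  have hne : uis ≠ ujs := by
    intro he
    rw [he, sub_self, norm_zero] at hnuij
    linarith
  have hJstar : J (uis, ujs) = t * D - t ^ 2 := by
    show (1 / 2) * (‖xi - uis‖ ^ 2 + ‖xj - ujs‖ ^ 2) + t * ‖uis - ujs‖ = _
    rw [hnai, hnbj, hnuij]; ring
  refine ⟨?_, ?_, hne⟩
  · intro u
    rw [hJstar]
    have hsplit : u.1 - u.2 = (xi - xj) - ((xi - u.1) - (xj - u.2)) := by abel
    have h1 : D - ‖(xi - u.1) - (xj - u.2)‖ ≤ ‖u.1 - u.2‖ := by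
      rw [hsplit]; exact norm_sub_norm_le _ _
    have h2 : ‖(xi - u.1) - (xj - u.2)‖ ≤ ‖xi - u.1‖ + ‖xj - u.2‖ := norm_sub_le _ _
    show t * D - t ^ 2 ≤ (1 / 2) * (‖xi - u.1‖ ^ 2 + ‖xj - u.2‖ ^ 2) + t * ‖u.1 - u.2‖
    nlinarith [sq_nonneg (‖xi - u.1‖ - t), sq_nonneg (‖xj - u.2‖ - t),
      mul_nonneg ht.le (by linarith : (0:ℝ) ≤ ‖u.1 - u.2‖ - D + ‖xi - u.1‖ + ‖xj - u.2‖)]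
  · intro u hu
    rw [hJstar] at hu
    have hu' : (1 / 2) * (‖xi - u.1‖ ^ 2 + ‖xj - u.2‖ ^ 2) + t * ‖u.1 - u.2‖ ≤ t * D - t ^ 2 := hu
    set a := xi - u.1 with hadef
    set b := xj - u.2 with hbdef
    have hsplit : u.1 - u.2 = (xi - xj) - (a - b) := by rw [hadef, hbdef]; abel
    have h1 : D - ‖a - b‖ ≤ ‖u.1 - u.2‖ := by
      rw [hsplit]; exact norm_sub_norm_le _ _
    have h2 : ‖a - b‖ ≤ ‖a‖ + ‖b‖ := norm_sub_le _ _
    have hprod : (0:ℝ) ≤ t * (‖u.1 - u.2‖ - D + ‖a‖ + ‖b‖) :=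
      mul_nonneg ht.le (by linarith)
    have hA2 : (‖a‖ - t) ^ 2 ≤ 0 := by nlinarith [sq_nonneg (‖b‖ - t)]
    have hB2 : (‖b‖ - t) ^ 2 ≤ 0 := by nlinarith [sq_nonneg (‖a‖ - t)]
    have hna : ‖a‖ = t := by nlinarith [sq_nonneg (‖a‖ - t)]
    have hnb : ‖b‖ = t := by nlinarith [sq_nonneg (‖b‖ - t)]
    have hM : ‖a - b‖ = ‖a‖ + ‖b‖ := by
      refine le_antisymm h2 ?_
      nlinarith
    have hN : ‖u.1 - u.2‖ = D - ‖a - b‖ := by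
      refine le_antisymm ?_ h1
      nlinarith
    -- b = -a
    have hray1 : SameRay ℝ a (-b) := by
      rw [sameRay_iff_norm_add]
      rw [← sub_eq_add_neg, norm_neg, hM]
    have hab : a = -b := hray1.eq_of_norm_eq (by rw [norm_neg, hna, hnb])
    have hb : b = -a := by rw [hab, neg_neg]
    -- a - b = 2 • a
    have hv : a - b = (2:ℝ) • a := by rw [hb, two_smul]; abel
    have hnv : ‖a - b‖ = 2 * t := by rw [hM, hna, hnb]; ring
    have hdmv : ‖u.1 - u.2‖ = D - 2 * t := by rw [hN, hnv]
    have hray2 : SameRay ℝ (a - b) ((xi - xj) - (a - b)) := by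
      rw [sameRay_iff_norm_add]
      rw [show (a - b) + ((xi - xj) - (a - b)) = xi - xj by abel, ← hDdef,
        ← hsplit, hnv, hdmv]
      ring
    have hkey : ‖a - b‖ • ((xi - xj) - (a - b)) = ‖(xi - xj) - (a - b)‖ • (a - b) :=
      sameRay_iff_norm_smul_eq.mp hray2
    rw [hnv, ← hsplit, hdmv, hsplit] at hkey
    -- 2t • (d - v) = (D - 2t) • v  with v = a - b ⟹ 2t • d = D • v
    have hDv : (2 * t) • (xi - xj) = D • (a - b) := by
      have := hkey
      rw [smul_sub, sub_smul] at this
      have h3 : (2 * t) • (xi - xj) - (2 * t) • (a - b)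
          = D • (a - b) - (2 * t) • (a - b) := this
      have := sub_left_injective.eq_iff.mp h3
      linear_combination (norm := module) this
    have ha : a = (t / D) • (xi - xj) := by
      have h4 : (a - b) = (D⁻¹ * (2 * t)) • (xi - xj) := by
        rw [mul_smul, hDv, inv_smul_smul₀ hD.ne']
      rw [hv] at h4
      have h5 : a = ((2:ℝ)⁻¹ * (D⁻¹ * (2 * t))) • (xi - xj) := by
        rw [mul_smul, ← h4, inv_smul_smul₀ two_ne_zero]
      rw [h5]
      congr 1
      field_simp
    have hu1 : u.1 = uis := by
      have : u.1 = xi - a := by rw [hadef]; abel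
      rw [this, ha]
    have hu2 : u.2 = ujs := by
      have : u.2 = xj - b := by rw [hbdef]; abel
      rw [this, hb, ha]
      show xj - -((t/D) • (xi - xj)) = xj + (t/D) • (xi - xj)
      abel
    exact Prod.ext hu1 hu2
end

section
/- Fix λ ≥ 0, γ > 0, a matrix X ∈ ℝ^{p×n}, a finite index set E with nonnegative weights ω_l and vectors c_l ∈ ℝ^n for l ∈ E, and positive constants ν₁,…,ν_p. Define f(U) := (1/2)‖X − U‖_F² + λ Σ_{l∈E} ω_l ‖U c_l‖₂ + γ Σ_{k=1}^p ν_k ‖a_k‖₂, where a_k is the k-th row of U ∈ ℝ^{p×n}. If ‖X_{k,·}‖₂ ≤ γ ν_k for every k = 1,…,p (where X_{k,·} is the k-th row of X), then U = 0 is a global minimizer of f, i.e., f(U) ≥ f(0) = (1/2)‖X‖_F² for all U ∈ ℝ^{p×n}. -/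
/-- Euclidean norm of a vector in `ℝ^m`. -/
noncomputable def vecEnorm {m : ℕ} (x : Fin m → ℝ) : ℝ := Real.sqrt (∑ i, x i ^ 2)

/-- Frobenius norm of a `p × n` real matrix. -/
noncomputable def frob {p n : ℕ} (U : Fin p → Fin n → ℝ) : ℝ :=
  Real.sqrt (∑ i, ∑ j, U i j ^ 2)

/-- Matrix-vector product. -/
noncomputable def mulVecF {p n : ℕ} (U : Fin p → Fin n → ℝ) (c : Fin n → ℝ) : Fin p → ℝ :=
  fun i => ∑ j, U i j * c j

/-! Expanding the square, `f U - f 0 = ½‖U‖_F² - ⟨X, U⟩ + (fusion penalty) + γ Σ_k ν_k ‖a_k‖₂`.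
Cauchy–Schwarz row by row bounds `⟨X, U⟩ = Σ_k ⟨X_{k,·}, a_k⟩` by `Σ_k ‖X_{k,·}‖₂ ‖a_k‖₂ ≤ γ Σ_k ν_k ‖a_k‖₂`,
and the fusion penalty is nonnegative, so `f U - f 0 ≥ ½‖U‖_F² ≥ 0`. -/

lemma vecEnorm_nonneg {m : ℕ} (x : Fin m → ℝ) : 0 ≤ vecEnorm x := Real.sqrt_nonneg _

lemma sum_mul_le_vecEnorm_mul {m : ℕ} (a b : Fin m → ℝ) :
    ∑ j, a j * b j ≤ vecEnorm a * vecEnorm b :=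
  Real.sum_mul_le_sqrt_mul_sqrt _ a b

lemma frob_sq {p n : ℕ} (Y : Fin p → Fin n → ℝ) : frob Y ^ 2 = ∑ i, ∑ j, Y i j ^ 2 :=
  Real.sq_sqrt (Finset.sum_nonneg fun _ _ => Finset.sum_nonneg fun _ _ => sq_nonneg _)

lemma frob_sub_sq {p n : ℕ} (X U : Fin p → Fin n → ℝ) :
    frob (X - U) ^ 2 = frob X ^ 2 - 2 * ∑ i, ∑ j, X i j * U i j + frob U ^ 2 := by
  simp only [frob_sq, Pi.sub_apply, sub_sq, Finset.sum_add_distrib, Finset.sum_sub_distrib,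
    Finset.mul_sum, mul_assoc]

lemma sum_sum_mul_le_of_vecEnorm_le {p n : ℕ} {X : Fin p → Fin n → ℝ} {b : Fin p → ℝ}
    (hX : ∀ k, vecEnorm (X k) ≤ b k) (U : Fin p → Fin n → ℝ) :
    ∑ i, ∑ j, X i j * U i j ≤ ∑ k, b k * vecEnorm (U k) :=
  Finset.sum_le_sum fun k _ => (sum_mul_le_vecEnorm_mul _ _).trans <|
    mul_le_mul_of_nonneg_right (hX k) (vecEnorm_nonneg _)

theorem stmt15_general {p n : ℕ} {ι : Type*} (E : Finset ι) (lam γ : ℝ)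
    (hlam : 0 ≤ lam)
    (ω : ι → ℝ) (hω : ∀ l ∈ E, 0 ≤ ω l) (c : ι → Fin n → ℝ)
    (ν : Fin p → ℝ)
    (X : Fin p → Fin n → ℝ) (hX : ∀ k, vecEnorm (X k) ≤ γ * ν k) :
    let f : (Fin p → Fin n → ℝ) → ℝ := fun U =>
      (1 / 2) * frob (X - U) ^ 2
        + lam * ∑ l ∈ E, ω l * vecEnorm (mulVecF U (c l))
        + γ * ∑ k, ν k * vecEnorm (U k)
    (∀ U, f 0 ≤ f U) ∧ f 0 = (1 / 2) * frob X ^ 2 := by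
  intro f
  have hf0 : f 0 = (1 / 2) * frob X ^ 2 := by simp [f, vecEnorm, mulVecF]
  refine ⟨fun U => ?_, hf0⟩
  have hinner : ∑ i, ∑ j, X i j * U i j ≤ γ * ∑ k, ν k * vecEnorm (U k) := by
    rw [Finset.mul_sum]
    refine (sum_sum_mul_le_of_vecEnorm_le hX U).trans_eq ?_
    simp only [mul_assoc]
  have hfusion : 0 ≤ lam * ∑ l ∈ E, ω l * vecEnorm (mulVecF U (c l)) :=
    mul_nonneg hlam (Finset.sum_nonneg fun l hl => mul_nonneg (hω l hl) (vecEnorm_nonneg _))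
  have hU : 0 ≤ frob U ^ 2 := sq_nonneg _
  rw [hf0]
  simp only [f, frob_sub_sq]
  linarith

/-- If `‖X_{k,·}‖₂ ≤ γν_k` for every row `k`, then `U = 0` is a global minimizer of the sparse
convex clustering objective, i.e. `f(U) ≥ f(0) = (1/2)‖X‖_F²` for all `U`. -/
theorem stmt15 {p n : ℕ} {ι : Type*} (E : Finset ι) (lam γ : ℝ)
    (hlam : 0 ≤ lam) (hγ : 0 < γ)
    (ω : ι → ℝ) (hω : ∀ l ∈ E, 0 ≤ ω l) (c : ι → Fin n → ℝ)
    (ν : Fin p → ℝ) (hν : ∀ k, 0 < ν k)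
    (X : Fin p → Fin n → ℝ) (hX : ∀ k, vecEnorm (X k) ≤ γ * ν k) :
    let f : (Fin p → Fin n → ℝ) → ℝ := fun U =>
      (1 / 2) * frob (X - U) ^ 2
        + lam * ∑ l ∈ E, ω l * vecEnorm (mulVecF U (c l))
        + γ * ∑ k, ν k * vecEnorm (U k)
    (∀ U, f 0 ≤ f U) ∧ f 0 = (1 / 2) * frob X ^ 2 :=
  stmt15_general E lam γ hlam ω hω c ν X hX
end
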